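/- In the model graph G, every edge joining a dual vertex x̃ to a triangle-vertex T (so that x ∈ T) is contained in exactly two triangles of G; the common neighbours of x̃ and T are exactly the two triangles of the Farey graph that contain x and share an edge with T. -/

import Mathlib

/-- Adjacency relation of the Farey graph on `Option ℚ`: `some x` and `some y` are
adjacent iff `|x.num * y.den - y.num * x.den| = 1`, and `none` (representing `∞`)
is adjacent to `some x` iff `x.den = 1`. -/
def fareyAdj : Option ℚ → Option ℚ → Prop
  | some x, some y => |x.num * (y.den : ℤ) - y.num * (x.den : ℤ)| = 1
  | some x, none => x.den = 1
  | none, some x => x.den = 1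
  | none, none => False

/-- The Farey graph `𝔽` on the vertex set `Option ℚ`. -/
def fareyGraph : SimpleGraph (Option ℚ) where
  Adj := fareyAdj
  symm := by
    constructor
    rintro (_ | x) (_ | y) h
    · exact h.elim
    · exact h
    · exact h
    · show |y.num * (x.den : ℤ) - x.num * (y.den : ℤ)| = 1
      rw [abs_sub_comm]
      exact h
  loopless := by
    constructor
    rintro (_ | x) h
    · exact h.elim
    · have : |x.num * (x.den : ℤ) - x.num * (x.den : ℤ)| = 1 := h
      simp at this

/-- A triangle of the Farey graph: a 3-element clique. -/
def FareyTriangle : Type := {s : Finset (Option ℚ) // fareyGraph.IsNClique 3 s}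

/-- The Farey dual graph `𝔽*`: vertices are the triangles of the Farey graph, two
triangles being adjacent iff they are distinct and share exactly two vertices. -/
def fareyDual : SimpleGraph FareyTriangle where
  Adj T T' := T ≠ T' ∧ (T.1 ∩ T'.1).card = 2
  symm := by
    constructor
    rintro T T' ⟨h1, h2⟩
    exact ⟨h1.symm, by rwa [Finset.inter_comm]⟩
  loopless := ⟨fun T h => h.1 rfl⟩

/-- Vertices of the model graph: Farey vertices `.inl x`, dual vertices
`.inr (.inl x)` (written `x̃`), and triangle-vertices `.inr (.inr T)`. -/
abbrev ModelVertex : Type := Option ℚ ⊕ (Option ℚ ⊕ FareyTriangle)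

/-- Adjacency relation of the model graph `G`. -/
def modelAdj : ModelVertex → ModelVertex → Prop
  | .inl x, .inl y => fareyGraph.Adj x y
  | .inl x, .inr (.inl y) => x = y
  | .inr (.inl x), .inl y => x = y
  | .inr (.inl x), .inr (.inr T) => x ∈ T.1
  | .inr (.inr T), .inr (.inl x) => x ∈ T.1
  | .inr (.inr T), .inr (.inr T') => T ≠ T' ∧ (T.1 ∩ T'.1).card = 2
  | _, _ => False

/-- The model graph `G` of the pants graph of `N₃`: on `V(𝔽) ⊔ V(𝔽) ⊔ T(𝔽)`, with
edges `x—y` for `x, y` adjacent in `𝔽`, `x̃—x`, `x̃—T` whenever `x ∈ T`, and `T—T'`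
whenever `T ≠ T'` and `|T ∩ T'| = 2`. -/
def modelGraph : SimpleGraph ModelVertex where
  Adj := modelAdj
  symm := by
    constructor
    rintro (x | x | T) (y | y | T') h
    · exact fareyGraph.adj_symm h
    · exact h.symm
    · exact h.elim
    · exact h.symm
    · exact h.elim
    · exact h
    · exact h.elim
    · exact h
    · exact ⟨h.1.symm, by
        have := h.2
        rwa [Finset.inter_comm]⟩
  loopless := by
    constructor
    rintro (x | x | T) h
    · exact SimpleGraph.irrefl fareyGraph h
    · exact h.elim
    · exact h.1 rfl

/-!
Send `∞` to `(1, 0)` and `p/q` in lowest terms (`q > 0`) to `(p, q)`: Farey vertices become the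
primitive vectors of `ℤ²` up to sign, and adjacency becomes `|det (u, v)| = 1`. If
`|det (u, v)| = 1`, Cramer's rule shows that the vectors `w` with `|det (u, w)| = |det (v, w)| = 1`
are exactly `±(u + v)` and `±(u - v)`, so every Farey edge lies in exactly two triangles.
If `T = {x, y, z}`, a triangle `S ≠ T` through `x` meeting `T` in two vertices contains the edge
`xy` or `xz`, so it is the second triangle on one of these two edges. In the model graph the
common neighbours of `x̃` and `T` are precisely the triangle-vertices of such `S`.
-/

namespace Farey

def det (u v : ℤ × ℤ) : ℤ := u.1 * v.2 - v.1 * u.2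

-- Cramer's rule
lemma det_smul_eq_add (u v w : ℤ × ℤ) : det u v • w = det w v • u + det u w • v := by
  ext <;> simp only [det, Prod.smul_fst, Prod.smul_snd, Prod.fst_add, Prod.snd_add, smul_eq_mul] <;>
    ring

lemma abs_det_eq_one_and_abs_det_eq_one_iff {u v w : ℤ × ℤ} (h : |det u v| = 1) :
    |det u w| = 1 ∧ |det v w| = 1 ↔ (w = u + v ∨ w = -(u + v)) ∨ (w = u - v ∨ w = -(u - v)) := by
  constructor
  · rintro ⟨hu, hv⟩
    have hw := det_smul_eq_add u v w
    rw [show det w v = -det v w by simp only [det]; ring] at hw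
    rcases abs_eq_abs.1 (h.trans hu.symm) with e₁ | e₁ <;>
      rcases abs_eq_abs.1 (hv.trans hu.symm) with e₂ | e₂ <;>
      rcases (abs_eq zero_le_one).1 hu with e | e <;>
      simp only [e₁, e₂, e, Prod.ext_iff, Prod.smul_fst, Prod.smul_snd, Prod.fst_add,
        Prod.snd_add, Prod.fst_neg, Prod.snd_neg, Prod.fst_sub, Prod.snd_sub,
        smul_eq_mul] at hw ⊢ <;>
      omega
  · rintro ((rfl | rfl) | rfl | rfl) <;> constructor <;> rw [← h, abs_eq_abs] <;>
      simp only [det, Prod.fst_add, Prod.snd_add, Prod.fst_neg, Prod.snd_neg, Prod.fst_sub,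
        Prod.snd_sub] <;>
      first | (left; ring1) | (right; ring1)

lemma isCoprime_of_abs_det_eq_one {u w : ℤ × ℤ} (h : |det u w| = 1) : IsCoprime w.1 w.2 :=
  have hsq : det u w * det u w = 1 := by rw [← abs_mul_abs_self, h, one_mul]
  ⟨-u.2 * det u w, u.1 * det u w, by simp only [det] at hsq ⊢; linear_combination hsq⟩

def vec : Option ℚ → ℤ × ℤ
  | none => (1, 0)
  | some x => (x.num, x.den)

lemma vec_injective : Function.Injective vec := by
  rintro (_ | x) (_ | y) h <;> simp only [vec, Prod.mk.injEq] at h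
  · rfl
  · exact absurd h.2 (by positivity)
  · exact absurd h.2 (by positivity)
  · exact congrArg some (Rat.ext h.1 (by exact_mod_cast h.2))

lemma vec_ne_neg (a b : Option ℚ) : vec a ≠ -vec b := by
  rcases a with _ | x <;> rcases b with _ | y <;> simp [vec, Prod.ext_iff]

lemma eq_of_vec_eq_or_eq_neg {a b : Option ℚ} {w : ℤ × ℤ}
    (ha : vec a = w ∨ vec a = -w) (hb : vec b = w ∨ vec b = -w) : a = b := by
  apply vec_injective
  rcases ha with ha | ha <;> rcases hb with hb | hb
  · rw [ha, hb]
  · exact absurd (by rw [ha, hb, neg_neg]) (vec_ne_neg a b)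
  · exact absurd (by rw [ha, hb]) (vec_ne_neg a b)
  · rw [ha, hb]

lemma exists_vec_eq_or_eq_neg {w : ℤ × ℤ} (hw : IsCoprime w.1 w.2) :
    ∃ a, vec a = w ∨ vec a = -w := by
  wlog h : 0 ≤ w.2 generalizing w
  · obtain ⟨a, ha⟩ := this (w := -w) (by simpa using hw.neg_neg) (by simp; omega)
    exact ⟨a, by rwa [neg_neg, or_comm] at ha⟩
  rcases h.eq_or_lt with h | h
  · obtain ⟨m, n⟩ := w
    obtain rfl : n = 0 := h.symm
    rcases Int.isUnit_iff.1 (isCoprime_zero_right.1 hw) with rfl | rfl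
    · exact ⟨none, Or.inl rfl⟩
    · exact ⟨none, Or.inr rfl⟩
  · have hc : Nat.Coprime w.1.natAbs w.2.natAbs := Int.isCoprime_iff_gcd_eq_one.1 hw
    refine ⟨some (w.1 / w.2), Or.inl ?_⟩
    simp only [vec, Rat.num_div_eq_of_coprime h hc, Rat.den_div_eq_of_coprime h hc]

lemma exists_setOf_vec_eq_or_eq_neg_eq_singleton {w : ℤ × ℤ} (hw : IsCoprime w.1 w.2) :
    ∃ c, {a | vec a = w ∨ vec a = -w} = {c} := by
  obtain ⟨c, hc⟩ := exists_vec_eq_or_eq_neg hw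
  exact ⟨c, Set.eq_singleton_iff_unique_mem.2 ⟨hc, fun a ha => eq_of_vec_eq_or_eq_neg ha hc⟩⟩

end Farey

open Farey in
lemma fareyGraph_adj_iff_abs_det {a b : Option ℚ} :
    fareyGraph.Adj a b ↔ |det (vec a) (vec b)| = 1 := by
  change fareyAdj a b ↔ _
  rcases a with _ | x <;> rcases b with _ | y <;> simp [fareyAdj, vec, det]

open Farey in
theorem fareyGraph_commonNeighbors_ncard {a b : Option ℚ} (hab : fareyGraph.Adj a b) :
    (fareyGraph.commonNeighbors a b).ncard = 2 := by
  set u := vec a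
  set v := vec b
  have huv : |det u v| = 1 := fareyGraph_adj_iff_abs_det.1 hab
  have hcommon := fun w => abs_det_eq_one_and_abs_det_eq_one_iff (w := w) huv
  obtain ⟨c, hc⟩ := exists_setOf_vec_eq_or_eq_neg_eq_singleton
    (isCoprime_of_abs_det_eq_one ((hcommon (u + v)).2 (by simp)).1)
  obtain ⟨d, hd⟩ := exists_setOf_vec_eq_or_eq_neg_eq_singleton
    (isCoprime_of_abs_det_eq_one ((hcommon (u - v)).2 (by simp)).1)
  have hcd : fareyGraph.commonNeighbors a b = {c, d} := by
    ext w
    rw [SimpleGraph.mem_commonNeighbors, fareyGraph_adj_iff_abs_det, fareyGraph_adj_iff_abs_det,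
      hcommon]
    exact or_congr (Set.ext_iff.1 hc w) (Set.ext_iff.1 hd w)
  rw [hcd, Set.ncard_pair]
  rintro rfl
  have h₁ : c ∈ {a | vec a = u + v ∨ vec a = -(u + v)} := hc ▸ rfl
  have h₂ : c ∈ {a | vec a = u - v ∨ vec a = -(u - v)} := hd ▸ rfl
  have : u = 0 ∨ v = 0 := by
    rcases h₁ with h₁ | h₁ <;> rcases h₂ with h₂ | h₂ <;> rw [h₁] at h₂ <;>
      simp only [Prod.ext_iff, Prod.fst_add, Prod.snd_add, Prod.fst_neg, Prod.snd_neg,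
        Prod.fst_sub, Prod.snd_sub, Prod.fst_zero, Prod.snd_zero] at h₂ ⊢ <;> omega
  rcases this with h | h <;> simp [h, det] at huv

lemma Set.exists_ne_eq_pair_of_ncard_eq_two {α : Type*} {s : Set α} {a : α} (hs : s.ncard = 2)
    (ha : a ∈ s) : ∃ b, b ≠ a ∧ s = {a, b} := by
  obtain ⟨x, y, hxy, rfl⟩ := Set.ncard_eq_two.1 hs
  rcases ha with rfl | rfl
  · exact ⟨y, hxy.symm, rfl⟩
  · exact ⟨x, hxy, Set.pair_comm x a⟩

open Finset

namespace SimpleGraph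

variable {V : Type*} [DecidableEq V] {G : SimpleGraph V} {S : Finset V} {x y z w w₁ w₂ : V}

lemma IsNClique.exists_mem_commonNeighbors_eq_triple (hS : G.IsNClique 3 S) (hx : x ∈ S)
    (hy : y ∈ S) (hxy : x ≠ y) : ∃ z ∈ G.commonNeighbors x y, S = {x, y, z} := by
  have hy' : y ∈ S.erase x := mem_erase.2 ⟨hxy.symm, hy⟩
  obtain ⟨z, hz⟩ : ∃ z, (S.erase x).erase y = {z} := by
    rw [← card_eq_one, card_erase_of_mem hy', card_erase_of_mem hx, hS.card_eq]
  have hzS : z ∈ (S.erase x).erase y := hz ▸ mem_singleton_self z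
  simp only [mem_erase] at hzS
  refine ⟨z, G.mem_commonNeighbors.2 ⟨hS.1 hx hzS.2.2 hzS.2.1.symm, hS.1 hy hzS.2.2 hzS.1.symm⟩, ?_⟩
  rw [← insert_erase hx, ← insert_erase hy', hz]

lemma IsNClique.eq_triple_of_ne_triple (hS : G.IsNClique 3 S)
    (hxy : G.commonNeighbors x y = {z, w}) (hx : x ∈ S) (hy : y ∈ S) (hne : x ≠ y)
    (hS' : S ≠ {x, y, z}) : S = {x, y, w} := by
  obtain ⟨c, hc, rfl⟩ := hS.exists_mem_commonNeighbors_eq_triple hx hy hne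
  rw [hxy] at hc
  rcases hc with rfl | rfl
  · exact absurd rfl hS'
  · rfl

lemma adjacent_triangle_triple (hxy : G.commonNeighbors x y = {z, w}) (hne : x ≠ y)
    (hwz : w ≠ z) :
    x ∈ ({x, y, w} : Finset V) ∧ ({x, y, w} : Finset V) ≠ {x, y, z} ∧
      #({x, y, w} ∩ {x, y, z}) = 2 := by
  obtain ⟨hxw, hyw⟩ := G.mem_commonNeighbors.1 (by simp [hxy] : w ∈ G.commonNeighbors x y)
  have hwT : w ∉ ({x, y, z} : Finset V) := by simp [hxw.ne', hyw.ne', hwz]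
  refine ⟨by simp, fun h => hwT (h ▸ by simp), ?_⟩
  rw [insert_inter_of_mem (by simp), insert_inter_of_mem (by simp),
    singleton_inter_of_notMem hwT, insert_empty_eq, card_pair hne]

lemma IsNClique.adjacent_triangle_iff (hS : G.IsNClique 3 S)
    (h₁ : G.commonNeighbors x y = {z, w₁}) (h₂ : G.commonNeighbors x z = {y, w₂})
    (hw₁ : w₁ ≠ z) (hw₂ : w₂ ≠ y) (hxy : x ≠ y) :
    x ∈ S ∧ S ≠ {x, y, z} ∧ #(S ∩ {x, y, z}) = 2 ↔ S = {x, y, w₁} ∨ S = {x, z, w₂} := by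
  have hxz : x ≠ z := (G.mem_commonNeighbors.1 (by simp [h₁] : z ∈ G.commonNeighbors x y)).1.ne
  have hT : ({x, y, z} : Finset V) = {x, z, y} := congrArg (insert x) (pair_comm y z)
  constructor
  · rintro ⟨hx, hST, hcard⟩
    obtain ⟨u, hu, hux⟩ := (S ∩ {x, y, z}).exists_mem_ne (by omega) x
    obtain ⟨huS, huT⟩ := mem_inter.1 hu
    simp only [mem_insert, mem_singleton, hux, false_or] at huT
    rcases huT with rfl | rfl
    · exact Or.inl (hS.eq_triple_of_ne_triple h₁ hx huS hxy hST)
    · exact Or.inr (hS.eq_triple_of_ne_triple h₂ hx huS hxz (hT ▸ hST))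
  · rintro (rfl | rfl)
    · exact adjacent_triangle_triple h₁ hxy hw₁
    · exact hT ▸ adjacent_triangle_triple h₂ hxz hw₂

theorem ncard_setOf_adjacent_triangles
    (hG : ∀ a b, G.Adj a b → (G.commonNeighbors a b).ncard = 2)
    (T : {s : Finset V // G.IsNClique 3 s}) (hx : x ∈ T.1) :
    {S : {s : Finset V // G.IsNClique 3 s} | x ∈ S.1 ∧ S ≠ T ∧ #(S.1 ∩ T.1) = 2}.ncard = 2 := by
  obtain ⟨y, hyT, hyx⟩ := T.1.exists_mem_ne (by rw [T.2.card_eq]; norm_num) x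
  obtain ⟨z, hz, hT⟩ := T.2.exists_mem_commonNeighbors_eq_triple hx hyT hyx.symm
  obtain ⟨hxz, hyz⟩ := G.mem_commonNeighbors.1 hz
  have hxy : G.Adj x y := T.2.1 hx hyT hyx.symm
  obtain ⟨w₁, hw₁, h₁⟩ := Set.exists_ne_eq_pair_of_ncard_eq_two (hG x y hxy) hz
  obtain ⟨w₂, hw₂, h₂⟩ := Set.exists_ne_eq_pair_of_ncard_eq_two (hG x z hxz)
    (G.mem_commonNeighbors.2 ⟨hxy, hyz.symm⟩)
  obtain ⟨hxw₁, hyw₁⟩ := G.mem_commonNeighbors.1 (by simp [h₁] : w₁ ∈ G.commonNeighbors x y)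
  obtain ⟨hxw₂, hzw₂⟩ := G.mem_commonNeighbors.1 (by simp [h₂] : w₂ ∈ G.commonNeighbors x z)
  let S₁ : {s : Finset V // G.IsNClique 3 s} :=
    ⟨{x, y, w₁}, is3Clique_triple_iff.2 ⟨hxy, hxw₁, hyw₁⟩⟩
  let S₂ : {s : Finset V // G.IsNClique 3 s} :=
    ⟨{x, z, w₂}, is3Clique_triple_iff.2 ⟨hxz, hxw₂, hzw₂⟩⟩
  have hS₁₂ : S₁ ≠ S₂ := by
    intro h
    have : y ∈ S₂.1 := by rw [← h]; simp [S₁]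
    simp [S₂, hyx, hyz.ne, hw₂.symm] at this
  convert Set.ncard_pair hS₁₂
  ext S
  simp only [Set.mem_insert_iff, Set.mem_singleton_iff, ne_eq, Subtype.ext_iff, hT]
  exact S.2.adjacent_triangle_iff h₁ h₂ hw₁ hw₂ hyx.symm

end SimpleGraph

lemma modelGraph_commonNeighbors_dual_triangle (x : Option ℚ) (T : FareyTriangle) :
    {w : ModelVertex | modelGraph.Adj (.inr (.inl x)) w ∧ modelGraph.Adj (.inr (.inr T)) w} =
      (fun S => .inr (.inr S)) '' {S | x ∈ S.1 ∧ S ≠ T ∧ #(S.1 ∩ T.1) = 2} := by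
  ext (y | y | S) <;> simp [modelGraph, modelAdj, Finset.inter_comm, eq_comm]

/-- In the model graph `G`, every edge joining a dual vertex `x̃` to a
triangle-vertex `T` (with `x ∈ T`) is contained in exactly two triangles of `G`:
the common neighbours of `x̃` and `T` are exactly the triangles of the Farey graph
containing `x` and sharing an edge with `T`. -/
theorem modelGraph_dual_triangle_edge_common_neighbours
    (x : Option ℚ) (T : FareyTriangle) (hx : x ∈ T.1) :
    {w : ModelVertex | modelGraph.Adj (.inr (.inl x)) w ∧
        modelGraph.Adj (.inr (.inr T)) w} =
      {w : ModelVertex | ∃ S : FareyTriangle, w = .inr (.inr S) ∧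
        x ∈ S.1 ∧ S ≠ T ∧ (S.1 ∩ T.1).card = 2} ∧
    {w : ModelVertex | modelGraph.Adj (.inr (.inl x)) w ∧
        modelGraph.Adj (.inr (.inr T)) w}.ncard = 2 := by
  rw [modelGraph_commonNeighbors_dual_triangle]
  refine ⟨Set.ext fun _ => exists_congr fun _ => and_comm.trans (and_congr_left' eq_comm), ?_⟩
  refine (Set.ncard_image_of_injective _ (Sum.inr_injective.comp Sum.inr_injective)).trans ?_
  exact SimpleGraph.ncard_setOf_adjacent_triangles
    (fun _ _ => fareyGraph_commonNeighbors_ncard) T hx
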